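/- Let p > 7 be a prime with binary expansion p = 2^{e_1} + 2^{e_2} + ⋯ + 2^{e_N} + 1, where N ≥ 2 and e_1 > e_2 > ⋯ > e_N > 0, and suppose e_1 − e_2 = 1. Then, as real numbers, (2 + 2·l(p))/2^{2 + l(p)} < (t(p) + 2·l(p) − 1)/p < (1 + l(p))/2^{l(p)}, where l(p) and t(p) are the length and tail of the sequence of lower halves of p. -/

import Mathlib

/-- The lower half of a positive integer: `lh m = ⌊m/2⌋`. -/
def lh (m : ℕ) : ℕ := m / 2

/-- The length of the sequence of lower halves of `n`: the least positive `i`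
such that the `i`-th iterate of `lh` at `n` lies in `{2, 3, 4}`. -/
noncomputable def lhLen (n : ℕ) : ℕ :=
  sInf {i : ℕ | 0 < i ∧ lh^[i] n ∈ ({2, 3, 4} : Set ℕ)}

/-- The tail of the sequence of lower halves of `n`: its last term. -/
noncomputable def lhTail (n : ℕ) : ℕ := lh^[lhLen n] n

/-!
With `m = e 1`, `p = 2^(m+1) + 2^m + (lower terms) + 1`, the lower terms being distinct even
powers of two below `2^m`; so `3 · 2^m < p < 4 · 2^m`. Hence `⌊p / 2^m⌋ = 3` while every
earlier lower half is at least `6`: the sequence of lower halves has length `m` and tail `3`.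
Both inequalities then reduce to `2 · 2^m < p < 4 · 2^m`.
-/

open Finset

lemma lh_iterate (n i : ℕ) : lh^[i] n = n / 2 ^ i := by
  induction i with
  | zero => simp
  | succ k ih =>
    rw [Function.iterate_succ_apply', ih, lh, Nat.div_div_eq_div_mul, pow_succ]

section DivTwoPowEqThree

variable {n L : ℕ}

lemma lhLen_eq_of_div_two_pow_eq_three (hL : 0 < L) (h : n / 2 ^ L = 3) : lhLen n = L := by
  have hmem : L ∈ {i : ℕ | 0 < i ∧ lh^[i] n ∈ ({2, 3, 4} : Set ℕ)} := by
    simp [hL, lh_iterate, h]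
  refine le_antisymm (Nat.sInf_le hmem) (le_csInf ⟨L, hmem⟩ ?_)
  rintro i ⟨-, hi⟩
  by_contra! hiL
  have hsplit : n / 2 ^ L = n / 2 ^ i / 2 ^ (L - i) := by
    rw [Nat.div_div_eq_div_mul, ← pow_add, Nat.add_sub_cancel' hiL.le]
  have hle : n / 2 ^ i / 2 ^ (L - i) ≤ 4 / 2 := by
    have hi4 : n / 2 ^ i ≤ 4 := by
      simp only [lh_iterate, Set.mem_insert_iff, Set.mem_singleton_iff] at hi
      omega
    have htwo : 2 ≤ 2 ^ (L - i) := Nat.le_self_pow (by omega) 2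
    exact Nat.div_le_div hi4 htwo (by norm_num)
  omega

lemma lhTail_eq_of_div_two_pow_eq_three (hL : 0 < L) (h : n / 2 ^ L = 3) : lhTail n = 3 := by
  rw [lhTail, lhLen_eq_of_div_two_pow_eq_three hL h, lh_iterate, h]

end DivTwoPowEqThree

section BinaryExpansion

variable {N : ℕ} {e : ℕ → ℕ}

lemma sum_two_pow_lt_two_pow_succ (hanti : ∀ i j : ℕ, i < j → j < N → e j < e i) :
    ∑ i ∈ range N, 2 ^ e i < 2 ^ (e 0 + 1) := by
  have hinj : Set.InjOn e (range N) := by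
    intro i hi j hj hij
    simp only [coe_range, Set.mem_Iio] at hi hj
    rcases lt_trichotomy i j with h | h | h
    · exact absurd hij (hanti i j h hj).ne'
    · exact h
    · exact absurd hij (hanti j i h hi).ne
  rw [← sum_image fun i hi j hj h => hinj hi hj h]
  refine Nat.geomSum_lt le_rfl fun k hk => ?_
  obtain ⟨i, hi, rfl⟩ := mem_image.1 hk
  rcases Nat.eq_zero_or_pos i with rfl | hi0
  · omega
  · have := hanti 0 i hi0 (mem_range.1 hi)
    omega

/-- With positive exponents the sum is even, so the odd number one above it stays below the
power of two bounding it. -/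
lemma sum_two_pow_add_one_lt_two_pow_succ (hanti : ∀ i j : ℕ, i < j → j < N → e j < e i)
    (hpos : ∀ i : ℕ, i < N → 0 < e i) :
    ∑ i ∈ range N, 2 ^ e i + 1 < 2 ^ (e 0 + 1) := by
  have heven : Even (∑ i ∈ range N, 2 ^ e i) :=
    even_sum _ fun i hi => (Nat.even_pow' (hpos i (mem_range.1 hi)).ne').2 even_two
  obtain ⟨k, hk⟩ := heven
  have hlt := sum_two_pow_lt_two_pow_succ hanti
  rw [pow_succ] at hlt ⊢
  omega

lemma three_mul_two_pow_le_sum_two_pow (hN : 2 ≤ N) (hgap : e 0 = e 1 + 1) :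
    3 * 2 ^ e 1 ≤ ∑ i ∈ range N, 2 ^ e i := by
  calc 3 * 2 ^ e 1 = ∑ i ∈ range 2, 2 ^ e i := by
        rw [sum_range_succ, sum_range_one, hgap, pow_succ]
        ring
    _ ≤ ∑ i ∈ range N, 2 ^ e i := sum_le_sum_of_subset (range_subset_range.2 hN)

end BinaryExpansion

lemma ratio_bounds_of_two_mul_two_pow_lt {n L : ℕ} (hlo : 2 * 2 ^ L < n) (hhi : n < 2 ^ (2 + L)) :
    (2 + 2 * (L : ℝ)) / 2 ^ (2 + L) < ((3 : ℝ) + 2 * L - 1) / n ∧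
      ((3 : ℝ) + 2 * L - 1) / n < (1 + L) / 2 ^ L := by
  have hloR : 2 * (2 : ℝ) ^ L < n := by exact_mod_cast hlo
  have hhiR : (n : ℝ) < 2 ^ (2 + L) := by exact_mod_cast hhi
  have hnum : (3 : ℝ) + 2 * L - 1 = 2 * (1 + L) := by ring
  have hL : (0 : ℝ) < 1 + L := by positivity
  have hn : (0 : ℝ) < n := lt_trans (by positivity) hloR
  rw [hnum]
  constructor
  · calc (2 + 2 * (L : ℝ)) / 2 ^ (2 + L) = 2 * (1 + L) / 2 ^ (2 + L) := by ring
      _ < 2 * (1 + L) / n := div_lt_div_of_pos_left (by positivity) hn hhiR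
  · rw [div_lt_div_iff₀ hn (by positivity)]
    linarith [mul_lt_mul_of_pos_left hloR hL]

theorem ratio_bounds_of_gap_one_general (p N : ℕ) (e : ℕ → ℕ)
    (hN : 2 ≤ N)
    (hanti : ∀ i j : ℕ, i < j → j < N → e j < e i)
    (hpos : ∀ i : ℕ, i < N → 0 < e i)
    (hexp : p = (∑ i ∈ Finset.range N, 2 ^ e i) + 1)
    (hgap : e 0 = e 1 + 1) :
    (2 + 2 * (lhLen p : ℝ)) / 2 ^ (2 + lhLen p)
        < ((lhTail p : ℝ) + 2 * (lhLen p : ℝ) - 1) / (p : ℝ) ∧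
      ((lhTail p : ℝ) + 2 * (lhLen p : ℝ) - 1) / (p : ℝ)
        < (1 + (lhLen p : ℝ)) / 2 ^ (lhLen p) := by
  have hL : 0 < e 1 := hpos 1 (by omega)
  have hlo : 3 * 2 ^ e 1 < p := by
    have := three_mul_two_pow_le_sum_two_pow hN hgap
    omega
  have hhi : p < 2 ^ (2 + e 1) := by
    have := sum_two_pow_add_one_lt_two_pow_succ hanti hpos
    rw [hgap] at this
    rw [add_comm 2, hexp]
    exact this
  have hdiv : p / 2 ^ e 1 = 3 := by
    refine Nat.div_eq_of_lt_le hlo.le ?_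
    rw [pow_add] at hhi
    linarith
  rw [lhLen_eq_of_div_two_pow_eq_three hL hdiv, lhTail_eq_of_div_two_pow_eq_three hL hdiv]
  exact_mod_cast ratio_bounds_of_two_mul_two_pow_lt (by omega) hhi

theorem ratio_bounds_of_gap_one (p N : ℕ) (e : ℕ → ℕ) (hp : p.Prime) (h7 : 7 < p)
    (hN : 2 ≤ N)
    (hanti : ∀ i j : ℕ, i < j → j < N → e j < e i)
    (hpos : ∀ i : ℕ, i < N → 0 < e i)
    (hexp : p = (∑ i ∈ Finset.range N, 2 ^ e i) + 1)
    (hgap : e 0 = e 1 + 1) :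
    (2 + 2 * (lhLen p : ℝ)) / 2 ^ (2 + lhLen p)
        < ((lhTail p : ℝ) + 2 * (lhLen p : ℝ) - 1) / (p : ℝ) ∧
      ((lhTail p : ℝ) + 2 * (lhLen p : ℝ) - 1) / (p : ℝ)
        < (1 + (lhLen p : ℝ)) / 2 ^ (lhLen p) :=
  ratio_bounds_of_gap_one_general p N e hN hanti hpos hexp hgap
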